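/- arXiv:2511.19336 — 4 statements merged into one kernel-verified Lean document; each statement's English description precedes it below -/
import Mathlib

section
/- Assume: (A1) there exists L_g > 0 and δ̄₁ > 0 such that for all δ ∈ (0, δ̄₁), ‖g(ξ,x,u,δ) − g(ξ′,x′,u′,δ)‖ ≤ L_g(‖ξ−ξ′‖ + ‖x−x′‖ + ‖u−u′‖) for all ξ, ξ′ ∈ ℝᵖ, x, x′ ∈ ℝⁿ, u, u′ ∈ ℝᵐ; (A2) there exists an L_ξ-Lipschitz map ξ_eq: ℝⁿ×ℝᵐ → ℝᵖ with g(ξ_eq(x,u), x, u, δ) = ξ_eq(x,u) for all x, u, δ > 0, and a continuous U: ℝᵖ → ℝ, δ̄₂ > 0 and a₁, a₂, a₃, a₄ > 0 such that for all δ ∈ (0, δ̄₂), all ξ̃, ξ̃′, x, u: a₁‖ξ̃‖² ≤ U(ξ̃) ≤ a₂‖ξ̃‖², U(g(ξ̃ + ξ_eq(x,u), x, u, δ) − ξ_eq(x,u)) − U(ξ̃) ≤ −a₃‖ξ̃‖², and U(ξ̃) − U(ξ̃′) ≤ a₄‖ξ̃ − ξ̃′‖(‖ξ̃‖ + ‖ξ̃′‖);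 (A3) there exist an L_{z*}-Lipschitz map z*: ℝⁿ → ℝ^{Tm}, an L_𝒯-Lipschitz map 𝒯: ℝ^{Tm}×ℝⁿ → ℝ^{Tm} with z*(x) = 𝒯(z*(x), x) for all x, and a continuous ℒ: ℝ^{Tm}×ℝⁿ → ℝ with b₁, b₂, b₃, b₄ > 0 such that b₁‖z − z*(x)‖² ≤ ℒ(z,x) ≤ b₂‖z − z*(x)‖², ℒ(𝒯(z,x),x) − ℒ(z,x) ≤ −b₃‖z − z*(x)‖² and ℒ(z,x) − ℒ(z′,x) ≤ b₄‖z − z′‖(‖z − z*(x)‖ + ‖z′ − z*(x)‖) for all z, z′, x. Define g̃(ξ̃, x, u, δ) := g(ξ̃ + ξ_eq(x,u), x, u, δ) − ξ_eq(x,u), 𝒯̃(z̃, x) := 𝒯(z̃ + z*(x), x) − z*(x), Δξ_eq(x, z̃, z̃′) := ξ_eq(x, Π(z̃ + z*(x))) − ξ_eq(x, Π(z̃′ + z*(x))), and, for fixed x, the boundary-layer update ξ̃₊ := g̃(ξ̃, x, Π(z̃ + z*(x)), δ) + Δξ_eq(x, 𝒯̃(z̃, x), z̃) and z̃₊ :=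 𝒯̃(z̃, x), where Π(z) denotes the first m components of z ∈ ℝ^{Tm}. Then there exist d₁, d₂, d₃, d₄ > 0 and a continuous function 𝒰: ℝᵖ × ℝ^{Tm} × ℝⁿ → ℝ such that, for all δ ∈ (0, min{δ̄₁, δ̄₂}), all ξ̃, ξ̃′ ∈ ℝᵖ, z̃, z̃′ ∈ ℝ^{Tm}, x ∈ ℝⁿ: d₁(‖ξ̃‖² + ‖z̃‖²) ≤ 𝒰(ξ̃, z̃, x) ≤ d₂(‖ξ̃‖² + ‖z̃‖²), 𝒰(ξ̃₊, z̃₊, x) − 𝒰(ξ̃, z̃, x) ≤ −d₃(‖ξ̃‖² + ‖z̃‖²), and 𝒰(ξ̃, z̃, x) − 𝒰(ξ̃′, z̃′, x) ≤ d₄‖(ξ̃, z̃) − (ξ̃′, z̃′)‖(‖(ξ̃, z̃)‖ + ‖(ξ̃′, z̃′)‖). -/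
set_option maxHeartbeats 2000000 in
/-- Lyapunov characterization of global exponential stability of the origin for
the boundary-layer system of the suboptimal reduced-order MPC loop. -/
theorem boundary_layer_lyapunov
    {n p m T : ℕ} (hT : 0 < T)
    (g : EuclideanSpace ℝ (Fin p) → EuclideanSpace ℝ (Fin n) → EuclideanSpace ℝ (Fin m) →
      ℝ → EuclideanSpace ℝ (Fin p))
    (Lg δ1 : ℝ) (hLg : 0 < Lg) (hδ1 : 0 < δ1)
    (hlipg : ∀ δ, 0 < δ → δ < δ1 → ∀ ξ ξ' x x' u u',
      ‖g ξ x u δ - g ξ' x' u' δ‖ ≤ Lg * (‖ξ - ξ'‖ + ‖x - x'‖ + ‖u - u'‖))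
    (ξeq : EuclideanSpace ℝ (Fin n) → EuclideanSpace ℝ (Fin m) → EuclideanSpace ℝ (Fin p))
    (Lξ : ℝ) (hLξ : 0 < Lξ)
    (hlipξeq : ∀ x x' u u', ‖ξeq x u - ξeq x' u'‖ ≤ Lξ * (‖x - x'‖ + ‖u - u'‖))
    (heq : ∀ x u δ, 0 < δ → g (ξeq x u) x u δ = ξeq x u)
    (U : EuclideanSpace ℝ (Fin p) → ℝ) (hUcont : Continuous U)
    (δ2 : ℝ) (hδ2 : 0 < δ2)
    (a1 a2 a3 a4 : ℝ) (ha1 : 0 < a1) (ha2 : 0 < a2) (ha3 : 0 < a3) (ha4 : 0 < a4)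
    (hU1 : ∀ δ, 0 < δ → δ < δ2 → ∀ ξt, a1 * ‖ξt‖ ^ 2 ≤ U ξt ∧ U ξt ≤ a2 * ‖ξt‖ ^ 2)
    (hU2 : ∀ δ, 0 < δ → δ < δ2 →
      ∀ (ξt : EuclideanSpace ℝ (Fin p)) (x : EuclideanSpace ℝ (Fin n))
        (u : EuclideanSpace ℝ (Fin m)),
        U (g (ξt + ξeq x u) x u δ - ξeq x u) - U ξt ≤ -a3 * ‖ξt‖ ^ 2)
    (hU3 : ∀ δ, 0 < δ → δ < δ2 → ∀ ξt ξt',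
      U ξt - U ξt' ≤ a4 * ‖ξt - ξt'‖ * (‖ξt‖ + ‖ξt'‖))
    (zstar : EuclideanSpace ℝ (Fin n) → EuclideanSpace ℝ (Fin (T * m)))
    (Lzstar : ℝ) (hLzstar : 0 < Lzstar)
    (hlipzstar : ∀ x x', ‖zstar x - zstar x'‖ ≤ Lzstar * ‖x - x'‖)
    (𝒯 : EuclideanSpace ℝ (Fin (T * m)) → EuclideanSpace ℝ (Fin n) →
      EuclideanSpace ℝ (Fin (T * m)))
    (L𝒯 : ℝ) (hL𝒯 : 0 < L𝒯)
    (hlip𝒯 : ∀ z z' x x',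
      ‖𝒯 z x - 𝒯 z' x'‖ ≤ L𝒯 * Real.sqrt (‖z - z'‖ ^ 2 + ‖x - x'‖ ^ 2))
    (hfix : ∀ x, zstar x = 𝒯 (zstar x) x)
    (ℒ : EuclideanSpace ℝ (Fin (T * m)) → EuclideanSpace ℝ (Fin n) → ℝ)
    (hℒcont : Continuous fun q : EuclideanSpace ℝ (Fin (T * m)) × EuclideanSpace ℝ (Fin n) =>
      ℒ q.1 q.2)
    (b1 b2 b3 b4 : ℝ) (hb1 : 0 < b1) (hb2 : 0 < b2) (hb3 : 0 < b3) (hb4 : 0 < b4)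
    (hℒ1 : ∀ z x, b1 * ‖z - zstar x‖ ^ 2 ≤ ℒ z x ∧ ℒ z x ≤ b2 * ‖z - zstar x‖ ^ 2)
    (hℒ2 : ∀ z x, ℒ (𝒯 z x) x - ℒ z x ≤ -b3 * ‖z - zstar x‖ ^ 2)
    (hℒ3 : ∀ z z' x,
      ℒ z x - ℒ z' x ≤ b4 * ‖z - z'‖ * (‖z - zstar x‖ + ‖z' - zstar x‖))
    (Pi : EuclideanSpace ℝ (Fin (T * m)) → EuclideanSpace ℝ (Fin m))
    (hPi : ∀ (z : EuclideanSpace ℝ (Fin (T * m))) (i : Fin m),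
      Pi z i = z (Fin.castLE (Nat.le_mul_of_pos_left m hT) i)) :
    ∃ d1 > (0 : ℝ), ∃ d2 > (0 : ℝ), ∃ d3 > (0 : ℝ), ∃ d4 > (0 : ℝ),
      ∃ 𝒰 : EuclideanSpace ℝ (Fin p) → EuclideanSpace ℝ (Fin (T * m)) →
          EuclideanSpace ℝ (Fin n) → ℝ,
        (Continuous fun q : EuclideanSpace ℝ (Fin p) × EuclideanSpace ℝ (Fin (T * m)) ×
            EuclideanSpace ℝ (Fin n) => 𝒰 q.1 q.2.1 q.2.2) ∧
        ∀ δ, 0 < δ → δ < min δ1 δ2 →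
          ∀ (ξt ξt' : EuclideanSpace ℝ (Fin p))
            (zt zt' : EuclideanSpace ℝ (Fin (T * m))) (x : EuclideanSpace ℝ (Fin n)),
            let ztp := 𝒯 (zt + zstar x) x - zstar x;
            let ξtp := (g (ξt + ξeq x (Pi (zt + zstar x))) x (Pi (zt + zstar x)) δ -
                ξeq x (Pi (zt + zstar x))) +
              (ξeq x (Pi (ztp + zstar x)) - ξeq x (Pi (zt + zstar x)));
            d1 * (‖ξt‖ ^ 2 + ‖zt‖ ^ 2) ≤ 𝒰 ξt zt x ∧
            𝒰 ξt zt x ≤ d2 * (‖ξt‖ ^ 2 + ‖zt‖ ^ 2) ∧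
            𝒰 ξtp ztp x - 𝒰 ξt zt x ≤ -d3 * (‖ξt‖ ^ 2 + ‖zt‖ ^ 2) ∧
            𝒰 ξt zt x - 𝒰 ξt' zt' x ≤
              d4 * Real.sqrt (‖ξt - ξt'‖ ^ 2 + ‖zt - zt'‖ ^ 2) *
                (Real.sqrt (‖ξt‖ ^ 2 + ‖zt‖ ^ 2) + Real.sqrt (‖ξt'‖ ^ 2 + ‖zt'‖ ^ 2)) := by
  
  classical
  -- constants
  set C : ℝ := Lξ * (L𝒯 + 1) with hCdef
  have hC : 0 < C := by positivity
  set κ : ℝ := (a3 ^ 2 / 2 + a3 * a4 * C ^ 2 + 2 * (a4 * C * Lg) ^ 2) / b3 with hκdef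
  have hκ : 0 < κ := by positivity
  have hκb3 : κ * b3 = a3 ^ 2 / 2 + a3 * a4 * C ^ 2 + 2 * (a4 * C * Lg) ^ 2 :=
    div_mul_cancel₀ _ hb3.ne'
  -- Pi is 1-Lipschitz
  have hPiLip : ∀ a b : EuclideanSpace ℝ (Fin (T * m)), ‖Pi a - Pi b‖ ≤ ‖a - b‖ := by
    intro a b
    rw [EuclideanSpace.norm_eq, EuclideanSpace.norm_eq]
    apply Real.sqrt_le_sqrt
    have key : ∀ i : Fin m, ‖(Pi a - Pi b) i‖ ^ 2 =
        ‖(a - b) (Fin.castLE (Nat.le_mul_of_pos_left m hT) i)‖ ^ 2 := by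
      intro i
      have h1 : (Pi a - Pi b) i = a (Fin.castLE (Nat.le_mul_of_pos_left m hT) i) -
          b (Fin.castLE (Nat.le_mul_of_pos_left m hT) i) := by
        simp [PiLp.sub_apply, hPi]
      have h2 : (a - b) (Fin.castLE (Nat.le_mul_of_pos_left m hT) i) =
          a (Fin.castLE (Nat.le_mul_of_pos_left m hT) i) -
          b (Fin.castLE (Nat.le_mul_of_pos_left m hT) i) := by
        simp [PiLp.sub_apply]
      rw [h1, h2]
    calc ∑ i : Fin m, ‖(Pi a - Pi b) i‖ ^ 2
        = ∑ i : Fin m, ‖(a - b) (Fin.castLE (Nat.le_mul_of_pos_left m hT) i)‖ ^ 2 :=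
          Finset.sum_congr rfl fun i _ => key i
      _ = ∑ j ∈ Finset.univ.image (Fin.castLE (Nat.le_mul_of_pos_left m hT)),
            ‖(a - b) j‖ ^ 2 := by
          rw [Finset.sum_image]
          intro x _ y _ hxy
          exact Fin.castLE_injective _ hxy
      _ ≤ ∑ j : Fin (T * m), ‖(a - b) j‖ ^ 2 :=
          Finset.sum_le_sum_of_subset_of_nonneg (Finset.subset_univ _)
            (fun j _ _ => by positivity)
  -- helper: a ≤ sqrt (a^2 + b^2) when 0 ≤ a
  have hle_sqrt : ∀ a b : ℝ, 0 ≤ a → a ≤ Real.sqrt (a ^ 2 + b ^ 2) := by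
    intro a b ha
    have h1 : Real.sqrt (a ^ 2) ≤ Real.sqrt (a ^ 2 + b ^ 2) :=
      Real.sqrt_le_sqrt (by nlinarith [sq_nonneg b])
    rwa [Real.sqrt_sq ha] at h1
  -- zstar continuous
  have hzc : Continuous zstar := by
    have hL : LipschitzWith (Real.toNNReal Lzstar) zstar := by
      apply LipschitzWith.of_dist_le_mul
      intro x y
      rw [dist_eq_norm, dist_eq_norm, Real.coe_toNNReal _ hLzstar.le]
      exact hlipzstar x y
    exact hL.continuous
  refine ⟨min (a3 * a1) (κ * b1), lt_min (by positivity) (by positivity),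
    max (a3 * a2) (κ * b2), lt_max_of_lt_left (by positivity),
    a3 ^ 2 / 2, by positivity,
    a3 * a4 + κ * b4, by positivity,
    fun ξ z x => a3 * U ξ + κ * ℒ (z + zstar x) x, ?_, ?_⟩
  · -- continuity
    apply Continuous.add
    · exact continuous_const.mul (hUcont.comp continuous_fst)
    · apply Continuous.mul continuous_const
      exact hℒcont.comp (((continuous_fst.comp continuous_snd).add
        (hzc.comp (continuous_snd.comp continuous_snd))).prodMk
        (continuous_snd.comp continuous_snd))
  · intro δ hδ0 hδm ξt ξt' zt zt' x
    obtain ⟨hδ1', hδ2'⟩ := lt_min_iff.mp hδm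
    intro ztp ξtp
    have hztpdef : ztp = 𝒯 (zt + zstar x) x - zstar x := rfl
    set u : EuclideanSpace ℝ (Fin m) := Pi (zt + zstar x) with hudef
    set gξ : EuclideanSpace ℝ (Fin p) := g (ξt + ξeq x u) x u δ - ξeq x u with hgξdef
    set e : EuclideanSpace ℝ (Fin p) := ξeq x (Pi (ztp + zstar x)) - ξeq x u with hedef
    have hξtpdef : ξtp = gξ + e := rfl
    -- norm bounds
    have hztp : ‖ztp‖ ≤ L𝒯 * ‖zt‖ := by
      have h := hlip𝒯 (zt + zstar x) (zstar x) x x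
      rw [← hfix x] at h
      simpa [hztpdef, add_sub_cancel_right, sub_self, norm_zero,
        Real.sqrt_sq (norm_nonneg zt)] using h
    have he : ‖e‖ ≤ C * ‖zt‖ := by
      have h1 : ‖e‖ ≤ Lξ * ‖Pi (ztp + zstar x) - u‖ := by
        simpa using hlipξeq x x (Pi (ztp + zstar x)) u
      have h3 : (ztp + zstar x) - (zt + zstar x) = ztp - zt := by abel
      have h2 : ‖Pi (ztp + zstar x) - u‖ ≤ ‖ztp - zt‖ := by
        have := hPiLip (ztp + zstar x) (zt + zstar x)
        rw [h3] at this
        exact this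
      have h4 : ‖ztp - zt‖ ≤ L𝒯 * ‖zt‖ + ‖zt‖ :=
        (norm_sub_le _ _).trans (by linarith)
      calc ‖e‖ ≤ Lξ * ‖Pi (ztp + zstar x) - u‖ := h1
        _ ≤ Lξ * (L𝒯 * ‖zt‖ + ‖zt‖) := by
            apply mul_le_mul_of_nonneg_left (h2.trans h4) hLξ.le
        _ = C * ‖zt‖ := by rw [hCdef]; ring
    have hgd : ‖gξ‖ ≤ Lg * ‖ξt‖ := by
      have h := hlipg δ hδ0 hδ1' (ξt + ξeq x u) (ξeq x u) x x u u
      rw [heq x u δ hδ0] at h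
      simpa [add_sub_cancel_right, sub_self, norm_zero] using h
    have hξtpn : ‖ξtp‖ ≤ Lg * ‖ξt‖ + C * ‖zt‖ := by
      rw [hξtpdef]
      exact (norm_add_le gξ e).trans (by linarith)
    -- part 1 & 2: bounds
    have hU1' := hU1 δ hδ0 hδ2' ξt
    have hℒ1' := hℒ1 (zt + zstar x) x
    rw [add_sub_cancel_right] at hℒ1'
    refine ⟨?_, ?_, ?_, ?_⟩
    · show min (a3 * a1) (κ * b1) * (‖ξt‖ ^ 2 + ‖zt‖ ^ 2) ≤
        a3 * U ξt + κ * ℒ (zt + zstar x) x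
      nlinarith [min_le_left (a3 * a1) (κ * b1), min_le_right (a3 * a1) (κ * b1),
        sq_nonneg ‖ξt‖, sq_nonneg ‖zt‖, hU1'.1, hℒ1'.1, ha3, hκ,
        mul_le_mul_of_nonneg_left hU1'.1 ha3.le,
        mul_le_mul_of_nonneg_left hℒ1'.1 hκ.le]
    · show a3 * U ξt + κ * ℒ (zt + zstar x) x ≤
        max (a3 * a2) (κ * b2) * (‖ξt‖ ^ 2 + ‖zt‖ ^ 2)
      nlinarith [le_max_left (a3 * a2) (κ * b2), le_max_right (a3 * a2) (κ * b2),
        sq_nonneg ‖ξt‖, sq_nonneg ‖zt‖,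
        mul_le_mul_of_nonneg_left hU1'.2 ha3.le,
        mul_le_mul_of_nonneg_left hℒ1'.2 hκ.le]
    · -- decrease
      show a3 * U ξtp + κ * ℒ (ztp + zstar x) x -
          (a3 * U ξt + κ * ℒ (zt + zstar x) x) ≤
        -(a3 ^ 2 / 2) * (‖ξt‖ ^ 2 + ‖zt‖ ^ 2)
      have hU32 := hU3 δ hδ0 hδ2' ξtp gξ
      have hediff : ξtp - gξ = e := by rw [hξtpdef]; abel
      rw [hediff] at hU32
      have hUd : U gξ - U ξt ≤ -a3 * ‖ξt‖ ^ 2 := hU2 δ hδ0 hδ2' ξt x u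
      have hcross : a4 * ‖e‖ * (‖ξtp‖ + ‖gξ‖) ≤
          a4 * (C * ‖zt‖) * ((Lg * ‖ξt‖ + C * ‖zt‖) + Lg * ‖ξt‖) := by
        have hn : (0:ℝ) ≤ ‖ξtp‖ + ‖gξ‖ := by positivity
        gcongr <;> first | assumption | positivity
      have hUsum : U ξtp - U ξt ≤
          a4 * (C * ‖zt‖) * ((Lg * ‖ξt‖ + C * ‖zt‖) + Lg * ‖ξt‖) - a3 * ‖ξt‖ ^ 2 := by
        linarith [hU32.trans hcross]
      have hW : ℒ (ztp + zstar x) x - ℒ (zt + zstar x) x ≤ -b3 * ‖zt‖ ^ 2 := by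
        have h := hℒ2 (zt + zstar x) x
        rw [add_sub_cancel_right] at h
        have h2 : ztp + zstar x = 𝒯 (zt + zstar x) x := by rw [hztpdef]; abel
        rw [h2]
        exact h
      have hWκ : κ * ℒ (ztp + zstar x) x - κ * ℒ (zt + zstar x) x ≤
          -(a3 ^ 2 / 2 + a3 * a4 * C ^ 2 + 2 * (a4 * C * Lg) ^ 2) * ‖zt‖ ^ 2 := by
        calc κ * ℒ (ztp + zstar x) x - κ * ℒ (zt + zstar x) x
            = κ * (ℒ (ztp + zstar x) x - ℒ (zt + zstar x) x) := by ring
          _ ≤ κ * (-b3 * ‖zt‖ ^ 2) := mul_le_mul_of_nonneg_left hW hκ.le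
          _ = -(κ * b3) * ‖zt‖ ^ 2 := by ring
          _ = -(a3 ^ 2 / 2 + a3 * a4 * C ^ 2 + 2 * (a4 * C * Lg) ^ 2) * ‖zt‖ ^ 2 := by
              rw [hκb3]
      have hUa3 : a3 * U ξtp - a3 * U ξt ≤
          a3 * (a4 * (C * ‖zt‖) * ((Lg * ‖ξt‖ + C * ‖zt‖) + Lg * ‖ξt‖) -
            a3 * ‖ξt‖ ^ 2) := by
        have := mul_le_mul_of_nonneg_left hUsum ha3.le
        linarith [this]
      nlinarith [hUa3, hWκ, sq_nonneg (a3 * ‖ξt‖ - 2 * (a4 * C * Lg) * ‖zt‖)]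
    · -- Lipschitz-type bound
      show a3 * U ξt + κ * ℒ (zt + zstar x) x -
          (a3 * U ξt' + κ * ℒ (zt' + zstar x) x) ≤
        (a3 * a4 + κ * b4) * Real.sqrt (‖ξt - ξt'‖ ^ 2 + ‖zt - zt'‖ ^ 2) *
          (Real.sqrt (‖ξt‖ ^ 2 + ‖zt‖ ^ 2) + Real.sqrt (‖ξt'‖ ^ 2 + ‖zt'‖ ^ 2))
      set s : ℝ := Real.sqrt (‖ξt - ξt'‖ ^ 2 + ‖zt - zt'‖ ^ 2) with hsdef
      set r : ℝ := Real.sqrt (‖ξt‖ ^ 2 + ‖zt‖ ^ 2) with hrdef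
      set r' : ℝ := Real.sqrt (‖ξt'‖ ^ 2 + ‖zt'‖ ^ 2) with hr'def
      have hs1 : ‖ξt - ξt'‖ ≤ s := hle_sqrt _ _ (norm_nonneg _)
      have hs2 : ‖zt - zt'‖ ≤ s := by
        rw [hsdef, add_comm]
        exact hle_sqrt _ _ (norm_nonneg _)
      have hr1 : ‖ξt‖ ≤ r := hle_sqrt _ _ (norm_nonneg _)
      have hr2 : ‖zt‖ ≤ r := by
        rw [hrdef, add_comm]
        exact hle_sqrt _ _ (norm_nonneg _)
      have hr1' : ‖ξt'‖ ≤ r' := hle_sqrt _ _ (norm_nonneg _)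
      have hr2' : ‖zt'‖ ≤ r' := by
        rw [hr'def, add_comm]
        exact hle_sqrt _ _ (norm_nonneg _)
      have hUl := hU3 δ hδ0 hδ2' ξt ξt'
      have hWl := hℒ3 (zt + zstar x) (zt' + zstar x) x
      rw [add_sub_cancel_right, add_sub_cancel_right,
        show (zt + zstar x) - (zt' + zstar x) = zt - zt' by abel] at hWl
      have h1 : a4 * ‖ξt - ξt'‖ * (‖ξt‖ + ‖ξt'‖) ≤ a4 * s * (r + r') := by
        gcongr <;> first | assumption | positivity
      have h2 : b4 * ‖zt - zt'‖ * (‖zt‖ + ‖zt'‖) ≤ b4 * s * (r + r') := by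
        gcongr <;> first | assumption | positivity
      have h3 : a3 * (U ξt - U ξt') ≤ a3 * (a4 * s * (r + r')) :=
        mul_le_mul_of_nonneg_left (hUl.trans h1) ha3.le
      have h4 : κ * (ℒ (zt + zstar x) x - ℒ (zt' + zstar x) x) ≤
          κ * (b4 * s * (r + r')) :=
        mul_le_mul_of_nonneg_left (hWl.trans h2) hκ.le
      have h5 : (a3 * a4 + κ * b4) * s * (r + r') =
          a3 * (a4 * s * (r + r')) + κ * (b4 * s * (r + r')) := by ring
      linarith [h3, h4]
end

section
/- Let f: ℝⁿ × ℝᵖ × ℝ → ℝⁿ, h: ℝⁿ → ℝᵖ, x* ∈ ℝⁿ, δ, L_f > 0 with ‖f(x, w, δ) − f(x, w′, δ)‖ ≤ δ L_f‖w − w′‖ for all x, w, w′ and ‖f(x, h(x), δ) − x‖ ≤ δ L_f‖x − x*‖ for all x. Let W: ℝⁿ → ℝ and c₃, c₄ > 0 satisfy W(f(x, h(x), δ)) − W(x) ≤ −δ c₃‖x − x*‖² and W(x₁) − W(x₂) ≤ c₄‖x₁ − x₂‖(‖x₁ − x*‖ + ‖x₂ − x*‖) for all x, x₁, x₂ ∈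 ℝⁿ. Then for all x ∈ ℝⁿ and w̃ ∈ ℝᵖ: W(f(x, w̃ + h(x), δ)) − W(x) ≤ −δ c₃‖x − x*‖² + δ² c₄ L_f²‖w̃‖² + (2δ c₄ L_f + 2δ² c₄ L_f²)‖w̃‖‖x − x*‖. -/
/-- Increment bound of the slow Lyapunov function along the interconnected dynamics. -/
theorem slow_lyapunov_increment_bound
    {n p : ℕ}
    (f : EuclideanSpace ℝ (Fin n) → EuclideanSpace ℝ (Fin p) → ℝ → EuclideanSpace ℝ (Fin n))
    (h : EuclideanSpace ℝ (Fin n) → EuclideanSpace ℝ (Fin p))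
    (xstar : EuclideanSpace ℝ (Fin n))
    (δ Lf : ℝ) (hδ : 0 < δ) (hLf : 0 < Lf)
    (hlipf : ∀ x w w', ‖f x w δ - f x w' δ‖ ≤ δ * Lf * ‖w - w'‖)
    (hsingle : ∀ x, ‖f x (h x) δ - x‖ ≤ δ * Lf * ‖x - xstar‖)
    (W : EuclideanSpace ℝ (Fin n) → ℝ)
    (c3 c4 : ℝ) (hc3 : 0 < c3) (hc4 : 0 < c4)
    (hW2 : ∀ x, W (f x (h x) δ) - W x ≤ -(δ * c3) * ‖x - xstar‖ ^ 2)
    (hW3 : ∀ x1 x2, W x1 - W x2 ≤ c4 * ‖x1 - x2‖ * (‖x1 - xstar‖ + ‖x2 - xstar‖)) :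
    ∀ (x : EuclideanSpace ℝ (Fin n)) (wt : EuclideanSpace ℝ (Fin p)),
      W (f x (wt + h x) δ) - W x ≤
        -(δ * c3) * ‖x - xstar‖ ^ 2 + δ ^ 2 * c4 * Lf ^ 2 * ‖wt‖ ^ 2 +
          (2 * δ * c4 * Lf + 2 * δ ^ 2 * c4 * Lf ^ 2) * ‖wt‖ * ‖x - xstar‖ := by
  intro x wt
  have hdiff : ‖f x (wt + h x) δ - f x (h x) δ‖ ≤ δ * Lf * ‖wt‖ := by
    have := hlipf x (wt + h x) (h x)
    simpa using this
  have h1 : ‖f x (h x) δ - xstar‖ ≤ δ * Lf * ‖x - xstar‖ + ‖x - xstar‖ := by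
    calc ‖f x (h x) δ - xstar‖ ≤ ‖f x (h x) δ - x‖ + ‖x - xstar‖ := norm_sub_le_norm_sub_add_norm_sub _ _ _
    _ ≤ δ * Lf * ‖x - xstar‖ + ‖x - xstar‖ := by linarith [hsingle x]
  have h2 : ‖f x (wt + h x) δ - xstar‖ ≤ δ * Lf * ‖wt‖ + (δ * Lf * ‖x - xstar‖ + ‖x - xstar‖) := by
    calc ‖f x (wt + h x) δ - xstar‖ ≤ ‖f x (wt + h x) δ - f x (h x) δ‖ + ‖f x (h x) δ - xstar‖ :=
      norm_sub_le_norm_sub_add_norm_sub _ _ _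
    _ ≤ _ := add_le_add hdiff h1
  have key := hW3 (f x (wt + h x) δ) (f x (h x) δ)
  have hWx := hW2 x
  have hn1 : (0:ℝ) ≤ ‖f x (wt + h x) δ - f x (h x) δ‖ := norm_nonneg _
  have hn2 : (0:ℝ) ≤ ‖wt‖ := norm_nonneg _
  have hn3 : (0:ℝ) ≤ ‖x - xstar‖ := norm_nonneg _
  have hn4 : (0:ℝ) ≤ ‖f x (wt + h x) δ - xstar‖ := norm_nonneg _
  have hn5 : (0:ℝ) ≤ ‖f x (h x) δ - xstar‖ := norm_nonneg _
  nlinarith [mul_le_mul hdiff (add_le_add h2 h1) (by positivity) (by positivity : (0:ℝ) ≤ δ * Lf * ‖wt‖),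
    mul_le_mul_of_nonneg_left (add_le_add h2 h1) (mul_nonneg hc4.le hn1),
    sq_nonneg ‖wt‖, sq_nonneg ‖x - xstar‖]
end

section
/- Let f: ℝⁿ × ℝᵖ × ℝ → ℝⁿ, G: ℝᵖ × ℝⁿ × ℝ → ℝᵖ, let h: ℝⁿ → ℝᵖ be L_h-Lipschitz with h(x) = G(h(x), x, δ) for all x, let x* ∈ ℝⁿ and δ, L_f, L_G > 0. Assume ‖f(x, w, δ) − f(x, w′, δ)‖ ≤ δ L_f‖w − w′‖ for all x, w, w′; ‖f(x, h(x), δ) − x‖ ≤ δ L_f‖x − x*‖ for all x; and ‖G(w, x, δ) − G(w′, x, δ)‖ ≤ L_G‖w − w′‖ for all w, w′, x. Let U: ℝᵖ → ℝ and b₃, b₄ > 0 satisfy U(G(ψ + h(x), x, δ) − h(x)) − U(ψ) ≤ −b₃‖ψ‖² and U(ψ₁) − U(ψ₂) ≤ b₄‖ψ₁ − ψ₂‖(‖ψ₁‖ + ‖ψ₂‖) for all ψ, ψ₁, ψ₂ ∈ ℝᵖ and x ∈ ℝⁿ. Then for all x ∈ ℝⁿ and w̃ ∈ ℝᵖ: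 U(G(w̃ + h(x), x, δ) − h(f(x, w̃ + h(x), δ))) − U(w̃) ≤ (−b₃ + 2δ b₄ L_h L_G L_f + δ² b₄ L_h² L_f²)‖w̃‖² + δ² b₄ L_h² L_f²‖x − x*‖² + (2δ b₄ L_h L_G L_f + 2δ² b₄ L_h² L_f²)‖x − x*‖‖w̃‖. -/
/-- Increment bound of the boundary-layer Lyapunov function along the true
interconnected dynamics. -/
theorem fast_lyapunov_increment_bound
    {n p : ℕ}
    (f : EuclideanSpace ℝ (Fin n) → EuclideanSpace ℝ (Fin p) → ℝ → EuclideanSpace ℝ (Fin n))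
    (G : EuclideanSpace ℝ (Fin p) → EuclideanSpace ℝ (Fin n) → ℝ → EuclideanSpace ℝ (Fin p))
    (h : EuclideanSpace ℝ (Fin n) → EuclideanSpace ℝ (Fin p))
    (xstar : EuclideanSpace ℝ (Fin n))
    (δ Lf LG Lh : ℝ) (hδ : 0 < δ) (hLf : 0 < Lf) (hLG : 0 < LG) (hLh : 0 < Lh)
    (hliph : ∀ x x', ‖h x - h x'‖ ≤ Lh * ‖x - x'‖)
    (heq : ∀ x, h x = G (h x) x δ)
    (hlipf : ∀ x w w', ‖f x w δ - f x w' δ‖ ≤ δ * Lf * ‖w - w'‖)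
    (hsingle : ∀ x, ‖f x (h x) δ - x‖ ≤ δ * Lf * ‖x - xstar‖)
    (hlipG : ∀ w w' x, ‖G w x δ - G w' x δ‖ ≤ LG * ‖w - w'‖)
    (U : EuclideanSpace ℝ (Fin p) → ℝ)
    (b3 b4 : ℝ) (hb3 : 0 < b3) (hb4 : 0 < b4)
    (hU2 : ∀ (ψ : EuclideanSpace ℝ (Fin p)) (x : EuclideanSpace ℝ (Fin n)),
      U (G (ψ + h x) x δ - h x) - U ψ ≤ -b3 * ‖ψ‖ ^ 2)
    (hU3 : ∀ ψ1 ψ2, U ψ1 - U ψ2 ≤ b4 * ‖ψ1 - ψ2‖ * (‖ψ1‖ + ‖ψ2‖)) :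
    ∀ (x : EuclideanSpace ℝ (Fin n)) (wt : EuclideanSpace ℝ (Fin p)),
      U (G (wt + h x) x δ - h (f x (wt + h x) δ)) - U wt ≤
        (-b3 + 2 * δ * b4 * Lh * LG * Lf + δ ^ 2 * b4 * Lh ^ 2 * Lf ^ 2) * ‖wt‖ ^ 2 +
          δ ^ 2 * b4 * Lh ^ 2 * Lf ^ 2 * ‖x - xstar‖ ^ 2 +
          (2 * δ * b4 * Lh * LG * Lf + 2 * δ ^ 2 * b4 * Lh ^ 2 * Lf ^ 2) *
            ‖x - xstar‖ * ‖wt‖ := by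
  intro x wt
  set A : EuclideanSpace ℝ (Fin p) := G (wt + h x) x δ - h (f x (wt + h x) δ) with hA
  set B : EuclideanSpace ℝ (Fin p) := G (wt + h x) x δ - h x with hB
  -- difference of the two arguments
  have hABdiff : A - B = h x - h (f x (wt + h x) δ) := by
    simp only [hA, hB]; abel
  -- bound ‖x - f x (wt + h x) δ‖
  have hxf : ‖x - f x (wt + h x) δ‖ ≤ δ * Lf * ‖x - xstar‖ + δ * Lf * ‖wt‖ := by
    have h1 := hsingle x
    have h2 := hlipf x (h x) (wt + h x)
    have h3 : ‖h x - (wt + h x)‖ = ‖wt‖ := by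
      have : h x - (wt + h x) = -wt := by abel
      rw [this, norm_neg]
    rw [h3] at h2
    calc ‖x - f x (wt + h x) δ‖
        = ‖(-(f x (h x) δ - x)) + (f x (h x) δ - f x (wt + h x) δ)‖ := by
          congr 1; abel
      _ ≤ ‖-(f x (h x) δ - x)‖ + ‖f x (h x) δ - f x (wt + h x) δ‖ := norm_add_le _ _
      _ ≤ δ * Lf * ‖x - xstar‖ + δ * Lf * ‖wt‖ := by
          rw [norm_neg]; exact add_le_add h1 h2
  -- bound ‖A - B‖
  have hd : ‖A - B‖ ≤ Lh * (δ * Lf * ‖x - xstar‖ + δ * Lf * ‖wt‖) := by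
    rw [hABdiff]
    calc ‖h x - h (f x (wt + h x) δ)‖ ≤ Lh * ‖x - f x (wt + h x) δ‖ := hliph _ _
      _ ≤ Lh * (δ * Lf * ‖x - xstar‖ + δ * Lf * ‖wt‖) := by
          exact mul_le_mul_of_nonneg_left hxf hLh.le
  -- bound ‖B‖
  have hBn : ‖B‖ ≤ LG * ‖wt‖ := by
    have := hlipG (wt + h x) (h x) x
    have h3 : ‖wt + h x - h x‖ = ‖wt‖ := by
      have : wt + h x - h x = wt := by abel
      rw [this]
    rw [h3] at this
    calc ‖B‖ = ‖G (wt + h x) x δ - G (h x) x δ‖ := by rw [hB, ← heq x]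
      _ ≤ LG * ‖wt‖ := this
  -- bound ‖A‖
  have hAn : ‖A‖ ≤ ‖B‖ + ‖A - B‖ := by
    calc ‖A‖ = ‖B + (A - B)‖ := by congr 1; abel
      _ ≤ ‖B‖ + ‖A - B‖ := norm_add_le _ _
  -- U decrease pieces
  have hBW : U B - U wt ≤ -b3 * ‖wt‖ ^ 2 := hU2 wt x
  have hAB : U A - U B ≤ b4 * ‖A - B‖ * (‖A‖ + ‖B‖) := hU3 A B
  set e : ℝ := δ * Lh * Lf * (‖wt‖ + ‖x - xstar‖) with he
  have hde : ‖A - B‖ ≤ e := by rw [he]; nlinarith [hd]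
  have henn : 0 ≤ e := by positivity
  have hsum : ‖A‖ + ‖B‖ ≤ 2 * LG * ‖wt‖ + e := by
    nlinarith [hAn, hBn, hde]
  have hprod : ‖A - B‖ * (‖A‖ + ‖B‖) ≤ e * (2 * LG * ‖wt‖ + e) :=
    mul_le_mul hde hsum (by positivity) henn
  have hmain : b4 * ‖A - B‖ * (‖A‖ + ‖B‖) ≤ b4 * (e * (2 * LG * ‖wt‖ + e)) := by
    rw [mul_assoc]
    exact mul_le_mul_of_nonneg_left hprod hb4.le
  calc U A - U wt = (U A - U B) + (U B - U wt) := by ring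
    _ ≤ b4 * (e * (2 * LG * ‖wt‖ + e)) + (-b3 * ‖wt‖ ^ 2) := by
        have := le_trans hAB hmain
        linarith
    _ = (-b3 + 2 * δ * b4 * Lh * LG * Lf + δ ^ 2 * b4 * Lh ^ 2 * Lf ^ 2) * ‖wt‖ ^ 2 +
          δ ^ 2 * b4 * Lh ^ 2 * Lf ^ 2 * ‖x - xstar‖ ^ 2 +
          (2 * δ * b4 * Lh * LG * Lf + 2 * δ ^ 2 * b4 * Lh ^ 2 * Lf ^ 2) *
            ‖x - xstar‖ * ‖wt‖ := by
        rw [he]; ring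
end

section
/- Let g: ℝᵖ × ℝⁿ × ℝᵐ × ℝ → ℝᵖ be L_g-Lipschitz in (ξ, x, u) in the sense ‖g(ξ, x, u, δ) − g(ξ′, x′, u′, δ)‖ ≤ L_g(‖ξ − ξ′‖ + ‖x − x′‖ + ‖u − u′‖); let ξ_eq: ℝⁿ × ℝᵐ → ℝᵖ satisfy g(ξ_eq(x,u), x, u, δ) = ξ_eq(x,u) and ‖ξ_eq(x, u) − ξ_eq(x, u′)‖ ≤ L_ξ‖u − u′‖; let z*: ℝⁿ → ℝ^{Tm} and let 𝒯: ℝ^{Tm} × ℝⁿ → ℝ^{Tm} be L_𝒯-Lipschitz with z*(x) = 𝒯(z*(x), x). Let U: ℝᵖ → ℝ and a₄ > 0 satisfy U(ψ₁) − U(ψ₂) ≤ a₄‖ψ₁ − ψ₂‖(‖ψ₁‖ + ‖ψ₂‖) for all ψ₁, ψ₂ ∈ ℝᵖ. With g̃(ξ̃, x, u, δ) := g(ξ̃ + ξ_eq(x,u), x, u, δ) − ξ_eq(x,u), 𝒯̃(z̃, x) := 𝒯(z̃ + z*(x), x) − z*(x), Δξ_eq(x, z̃, z̃′) := ξ_eq(x,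 Π(z̃ + z*(x))) − ξ_eq(x, Π(z̃′ + z*(x))), ξ̃₊ := g̃(ξ̃, x, Π(z̃ + z*(x)), δ) + Δξ_eq(x, 𝒯̃(z̃, x), z̃) and ξ̃₊^{nom} := g̃(ξ̃, x, Π(z̃ + z*(x)), δ), where Π(z) denotes the first m components of z ∈ ℝ^{Tm}, there exist constants k₁, k₂ > 0 depending only on a₄, L_g, L_ξ, L_𝒯 such that for all ξ̃ ∈ ℝᵖ, z̃ ∈ ℝ^{Tm}, x ∈ ℝⁿ, δ > 0: U(ξ̃₊) − U(ξ̃₊^{nom}) ≤ 2 k₁‖ξ̃‖‖z̃‖ + k₂‖z̃‖². -/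
private lemma proj_norm_le' {m N : ℕ} (e : Fin m → Fin N) (he : Function.Injective e)
    (v : EuclideanSpace ℝ (Fin N)) :
    Real.sqrt (∑ i, (v (e i)) ^ 2) ≤ ‖v‖ := by
  rw [EuclideanSpace.norm_eq]
  apply Real.sqrt_le_sqrt
  simp only [Real.norm_eq_abs, sq_abs]
  calc ∑ i, (v (e i)) ^ 2
      = ∑ j ∈ Finset.univ.image e, (v j) ^ 2 := by
        rw [Finset.sum_image (fun a _ b _ h => he h)]
    _ ≤ ∑ j, (v j) ^ 2 :=
        Finset.sum_le_sum_of_subset_of_nonneg (Finset.subset_univ _)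
          (fun _ _ _ => sq_nonneg _)

/-- Bound on the Lyapunov difference between the true fast-error update and the
update with frozen equilibrium in the boundary-layer MPC dynamics. -/
theorem boundary_layer_drift_term_bound
    {n p m T : ℕ} (hT : 0 < T)
    (g : EuclideanSpace ℝ (Fin p) → EuclideanSpace ℝ (Fin n) → EuclideanSpace ℝ (Fin m) →
      ℝ → EuclideanSpace ℝ (Fin p))
    (Lg : ℝ) (hLg : 0 < Lg)
    (hlipg : ∀ ξ ξ' x x' u u' δ,
      ‖g ξ x u δ - g ξ' x' u' δ‖ ≤ Lg * (‖ξ - ξ'‖ + ‖x - x'‖ + ‖u - u'‖))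
    (ξeq : EuclideanSpace ℝ (Fin n) → EuclideanSpace ℝ (Fin m) → EuclideanSpace ℝ (Fin p))
    (Lξ : ℝ) (hLξ : 0 < Lξ)
    (heq : ∀ x u δ, g (ξeq x u) x u δ = ξeq x u)
    (hlipξeq : ∀ x u u', ‖ξeq x u - ξeq x u'‖ ≤ Lξ * ‖u - u'‖)
    (zstar : EuclideanSpace ℝ (Fin n) → EuclideanSpace ℝ (Fin (T * m)))
    (𝒯 : EuclideanSpace ℝ (Fin (T * m)) → EuclideanSpace ℝ (Fin n) →
      EuclideanSpace ℝ (Fin (T * m)))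
    (L𝒯 : ℝ) (hL𝒯 : 0 < L𝒯)
    (hlip𝒯 : ∀ z z' x x', ‖𝒯 z x - 𝒯 z' x'‖ ≤ L𝒯 * Real.sqrt (‖z - z'‖ ^ 2 + ‖x - x'‖ ^ 2))
    (hfix : ∀ x, zstar x = 𝒯 (zstar x) x)
    (U : EuclideanSpace ℝ (Fin p) → ℝ)
    (a4 : ℝ) (ha4 : 0 < a4)
    (hU3 : ∀ ψ1 ψ2, U ψ1 - U ψ2 ≤ a4 * ‖ψ1 - ψ2‖ * (‖ψ1‖ + ‖ψ2‖))
    (Pi : EuclideanSpace ℝ (Fin (T * m)) → EuclideanSpace ℝ (Fin m))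
    (hPi : ∀ (z : EuclideanSpace ℝ (Fin (T * m))) (i : Fin m),
      Pi z i = z (Fin.castLE (Nat.le_mul_of_pos_left m hT) i)) :
    ∃ k1 > (0 : ℝ), ∃ k2 > (0 : ℝ),
      ∀ (ξt : EuclideanSpace ℝ (Fin p)) (zt : EuclideanSpace ℝ (Fin (T * m)))
        (x : EuclideanSpace ℝ (Fin n)) (δ : ℝ), 0 < δ →
        U ((g (ξt + ξeq x (Pi (zt + zstar x))) x (Pi (zt + zstar x)) δ -
              ξeq x (Pi (zt + zstar x))) +
            (ξeq x (Pi ((𝒯 (zt + zstar x) x - zstar x) + zstar x)) -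
              ξeq x (Pi (zt + zstar x)))) -
          U (g (ξt + ξeq x (Pi (zt + zstar x))) x (Pi (zt + zstar x)) δ -
              ξeq x (Pi (zt + zstar x))) ≤
          2 * k1 * ‖ξt‖ * ‖zt‖ + k2 * ‖zt‖ ^ 2 := by
  -- Pi is 1-Lipschitz
  have hPiLip : ∀ a b : EuclideanSpace ℝ (Fin (T * m)), ‖Pi a - Pi b‖ ≤ ‖a - b‖ := by
    intro a b
    have h1 : ‖Pi a - Pi b‖ =
        Real.sqrt (∑ i : Fin m, ((a - b) (Fin.castLE (Nat.le_mul_of_pos_left m hT) i)) ^ 2) := by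
      rw [EuclideanSpace.norm_eq]
      congr 1
      apply Finset.sum_congr rfl
      intro i _
      simp [hPi, Real.norm_eq_abs, sq_abs, PiLp.sub_apply]
    rw [h1]
    exact proj_norm_le' _ (fun i j h => by
      have := congrArg Fin.val h
      simpa [Fin.ext_iff] using this) _
  set K : ℝ := Lξ * (L𝒯 + 1) with hK
  have hKpos : 0 < K := by positivity
  refine ⟨a4 * K * Lg, by positivity, a4 * K ^ 2, by positivity, ?_⟩
  intro ξt zt x δ _
  set w := zt + zstar x with hw
  set u := Pi w with hu
  set B := g (ξt + ξeq x u) x u δ - ξeq x u with hB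
  have hsimp : (𝒯 w x - zstar x) + zstar x = 𝒯 w x := sub_add_cancel _ _
  rw [hsimp]
  set D := ξeq x (Pi (𝒯 w x)) - ξeq x u with hD
  -- bound ‖B‖
  have hBbnd : ‖B‖ ≤ Lg * ‖ξt‖ := by
    have : B = g (ξt + ξeq x u) x u δ - g (ξeq x u) x u δ := by rw [hB, heq]
    rw [this]
    have h := hlipg (ξt + ξeq x u) (ξeq x u) x x u u δ
    simpa [add_sub_cancel_right] using h
  -- bound ‖D‖
  have hDbnd : ‖D‖ ≤ K * ‖zt‖ := by
    have h1 : ‖D‖ ≤ Lξ * ‖Pi (𝒯 w x) - Pi w‖ := hlipξeq x _ _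
    have h2 : ‖Pi (𝒯 w x) - Pi w‖ ≤ ‖𝒯 w x - w‖ := hPiLip _ _
    have h3 : ‖𝒯 w x - w‖ ≤ (L𝒯 + 1) * ‖zt‖ := by
      have : 𝒯 w x - w = (𝒯 w x - 𝒯 (zstar x) x) - zt := by
        rw [← hfix x, hw]; abel
      rw [this]
      calc ‖(𝒯 w x - 𝒯 (zstar x) x) - zt‖
          ≤ ‖𝒯 w x - 𝒯 (zstar x) x‖ + ‖zt‖ := norm_sub_le _ _
        _ ≤ L𝒯 * Real.sqrt (‖w - zstar x‖ ^ 2 + ‖x - x‖ ^ 2) + ‖zt‖ := by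
            have := hlip𝒯 w (zstar x) x x
            linarith
        _ = L𝒯 * ‖zt‖ + ‖zt‖ := by
            rw [hw]
            simp [add_sub_cancel_right, Real.sqrt_sq (norm_nonneg _)]
        _ = (L𝒯 + 1) * ‖zt‖ := by ring
    calc ‖D‖ ≤ Lξ * ‖Pi (𝒯 w x) - Pi w‖ := h1
      _ ≤ Lξ * ‖𝒯 w x - w‖ := by nlinarith
      _ ≤ Lξ * ((L𝒯 + 1) * ‖zt‖) := by nlinarith
      _ = K * ‖zt‖ := by rw [hK]; ring
  have hmain : U (B + D) - U B ≤ a4 * ‖D‖ * (‖B + D‖ + ‖B‖) := by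
    have := hU3 (B + D) B
    simpa [add_sub_cancel_left] using this
  have hBD : ‖B + D‖ ≤ ‖B‖ + ‖D‖ := norm_add_le _ _
  have hDnn : (0:ℝ) ≤ ‖D‖ := norm_nonneg _
  have hBnn : (0:ℝ) ≤ ‖B‖ := norm_nonneg _
  have hzn : (0:ℝ) ≤ ‖zt‖ := norm_nonneg _
  have hxn : (0:ℝ) ≤ ‖ξt‖ := norm_nonneg _
  nlinarith [mul_nonneg ha4.le hDnn, mul_nonneg hzn hxn, sq_nonneg ‖zt‖,
    mul_le_mul_of_nonneg_left hBbnd (mul_nonneg ha4.le hDnn),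
    mul_le_mul hDbnd hDbnd hDnn (by positivity : (0:ℝ) ≤ K * ‖zt‖),
    mul_le_mul hDbnd hBbnd hBnn (by positivity : (0:ℝ) ≤ K * ‖zt‖)]
end
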